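/- Suppose n is odd and p ≥ 1 satisfies p ≡ 0 (mod n+1). Then 1 − φ^p is the zero endomorphism of ℤ^n, and hence G_{n,p} = ℤ^n / Im(1 − φ^p) is isomorphic to ℤ^n. (Note that such p is necessarily even, since n+1 is even.) -/
import Mathlib


/-- The Coxeter transformation of the linearly oriented Dynkin quiver `A_n`, acting on
`ℤ^n = K_0(D^b(mod K A_n))` in the basis of classes of simple modules:
`φ(e_i) = e_{i+1}` for `1 ≤ i ≤ n-1` and `φ(e_n) = -(e_1 + ⋯ + e_n)`.
(Here the basis vector `e_i` is `Pi.single ⟨i-1, _⟩ 1`.) -/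
noncomputable def phiA (n : ℕ) : Module.End ℤ (Fin n → ℤ) :=
  (Pi.basisFun ℤ (Fin n)).constr ℤ (fun i =>
    if h : (i : ℕ) + 1 < n then Pi.single (⟨(i : ℕ) + 1, h⟩ : Fin n) 1 else fun _ => -1)
lemma phiA_basis (n : ℕ) (i : Fin n) :
    phiA n (Pi.single i 1) =
      if h : (i : ℕ) + 1 < n then Pi.single (⟨(i : ℕ) + 1, h⟩ : Fin n) 1 else fun _ => -1 := by
  have := (Pi.basisFun ℤ (Fin n)).constr_basis ℤ (fun i =>
    if h : (i : ℕ) + 1 < n then Pi.single (⟨(i : ℕ) + 1, h⟩ : Fin n) 1 else fun _ => -1) i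
  simpa [phiA, Pi.basisFun_apply] using this

lemma phiA_pow_single (m : ℕ) (k : ℕ) (hk : k < m + 1) :
    ((phiA (m + 1)) ^ k) (Pi.single (0 : Fin (m + 1)) 1) = Pi.single (⟨k, hk⟩ : Fin (m + 1)) 1 := by
  induction k with
  | zero => simp [Fin.ext_iff]
  | succ k ih =>
    have hk' : k < m + 1 := Nat.lt_of_succ_lt hk
    rw [pow_succ', Module.End.mul_apply, ih hk', phiA_basis]
    simp only [dif_pos (show (⟨k, hk'⟩ : Fin (m+1)).1 + 1 < m + 1 from hk)]

lemma phiA_neg_one (m : ℕ) :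
    phiA (m + 1) (fun _ => (-1 : ℤ)) = Pi.single (0 : Fin (m + 1)) 1 := by
  have hsum : (fun _ => (1 : ℤ)) = ∑ i : Fin (m + 1), Pi.single i (1 : ℤ) := by
    rw [Finset.univ_sum_single (fun _ => (1 : ℤ))]
  have h1 : phiA (m + 1) (fun _ => (1 : ℤ)) = - Pi.single (0 : Fin (m + 1)) 1 := by
    rw [hsum, map_sum]
    have : ∀ i : Fin (m + 1), phiA (m + 1) (Pi.single i 1) =
        if h : (i : ℕ) + 1 < m + 1 then Pi.single (⟨(i : ℕ) + 1, h⟩ : Fin (m + 1)) 1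
        else fun _ => -1 := phiA_basis (m + 1)
    rw [Finset.sum_congr rfl (fun i _ => this i), Fin.sum_univ_castSucc]
    have hlast : ¬ ((Fin.last m : ℕ) + 1 < m + 1) := by simp [Fin.last]
    rw [dif_neg hlast]
    have hterm : ∀ j : Fin m,
        (if h : ((Fin.castSucc j : Fin (m+1)) : ℕ) + 1 < m + 1 then
          Pi.single (⟨((Fin.castSucc j : Fin (m+1)) : ℕ) + 1, h⟩ : Fin (m + 1)) (1:ℤ)
        else fun _ => -1) = Pi.single (Fin.succ j) 1 := by
      intro j
      rw [dif_pos (show ((Fin.castSucc j : Fin (m+1)) : ℕ) + 1 < m + 1 by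
        simpa using j.2)]
      rfl
    rw [Finset.sum_congr rfl (fun j _ => hterm j)]
    have hsplit : (fun _ => (1:ℤ)) = Pi.single (0 : Fin (m+1)) 1 + ∑ j : Fin m, Pi.single (Fin.succ j) (1:ℤ) := by
      rw [hsum, Fin.sum_univ_succ]
    have : (∑ j : Fin m, Pi.single (Fin.succ j) (1:ℤ)) = (fun _ => (1:ℤ)) - Pi.single (0 : Fin (m+1)) 1 := by
      rw [hsplit]; abel
    rw [this]
    funext x
    simp [Pi.single_apply]
    ring
  have : (fun _ => (-1 : ℤ)) = -(fun _ => (1 : ℤ) : Fin (m+1) → ℤ) := by funext x; simp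
  rw [this, map_neg, h1, neg_neg]

lemma phiA_pow_order (m : ℕ) : (phiA (m + 1)) ^ (m + 2) = 1 := by
  have h0 : ((phiA (m + 1)) ^ (m + 2)) (Pi.single (0 : Fin (m + 1)) 1)
      = Pi.single (0 : Fin (m + 1)) 1 := by
    have hm : ((phiA (m + 1)) ^ (m + 1)) (Pi.single (0 : Fin (m + 1)) 1) = fun _ => (-1 : ℤ) := by
      rw [pow_succ', Module.End.mul_apply, phiA_pow_single m m (Nat.lt_succ_self m), phiA_basis]
      simp
    rw [show m + 2 = (m + 1) + 1 from rfl, pow_succ', Module.End.mul_apply, hm, phiA_neg_one]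
  apply (Pi.basisFun ℤ (Fin (m + 1))).ext
  intro i
  have hb : (Pi.basisFun ℤ (Fin (m + 1))) i = Pi.single i 1 := by
    simp [Pi.basisFun_apply]
  rw [hb]
  have hi : (i : ℕ) < m + 1 := i.2
  have hsingle : Pi.single i (1:ℤ) = ((phiA (m + 1)) ^ (i : ℕ)) (Pi.single (0 : Fin (m + 1)) 1) := by
    rw [phiA_pow_single m i hi]
  rw [hsingle, ← Module.End.mul_apply, ← pow_add, show (m + 2) + (i:ℕ) = (i:ℕ) + (m + 2) from Nat.add_comm _ _,
    pow_add, Module.End.mul_apply, h0, Module.End.one_apply]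

theorem stmt2 (n p : ℕ) (hn : Odd n) (hp : 1 ≤ p) (hp0 : p ≡ 0 [MOD n + 1]) :
    Even p ∧
    (1 : Module.End ℤ (Fin n → ℤ)) - (phiA n) ^ p = 0 ∧
    Nonempty
      (((Fin n → ℤ) ⧸ LinearMap.range
          ((1 : Module.End ℤ (Fin n → ℤ)) - (phiA n) ^ p)) ≃+ (Fin n → ℤ)) := by
  have hdvd : (n + 1) ∣ p := (Nat.modEq_zero_iff_dvd).mp hp0
  obtain ⟨k, rfl⟩ := hdvd
  have hne : Even (n + 1) := Odd.add_one hn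
  obtain ⟨m, hm⟩ : ∃ m, n = m + 1 := ⟨n - 1, by obtain ⟨t, ht⟩ := hn; omega⟩
  subst hm
  have hpow : (phiA (m + 1)) ^ ((m + 1 + 1) * k) = 1 := by
    rw [pow_mul, show m + 1 + 1 = m + 2 from rfl, phiA_pow_order, one_pow]
  have hzero : (1 : Module.End ℤ (Fin (m + 1) → ℤ)) - (phiA (m + 1)) ^ ((m + 1 + 1) * k) = 0 := by
    rw [hpow, sub_self]
  refine ⟨hne.mul_right k, hzero, ⟨?_⟩⟩
  have hrange : LinearMap.range ((1 : Module.End ℤ (Fin (m + 1) → ℤ)) -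
      (phiA (m + 1)) ^ ((m + 1 + 1) * k)) = ⊥ := by
    rw [hzero, LinearMap.range_zero]
  exact (Submodule.quotEquivOfEqBot _ hrange).toAddEquiv
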